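/- Let (B, +, ∘) be a skew left brace with |Γ₂(B)| = 2, where Γ₂(B) is the second term of the lower central series of the skew brace. Then Γ₃(B) = 1, i.e., B is nilpotent of class exactly 2. -/

import Mathlib

/-- A skew left brace structure on a type carrying both an additive and a
multiplicative group structure: the compatibility (skew left distributivity)
`a ∘ (b + c) = (a ∘ b) - a + (a ∘ c)` holds, and the two identities coincide. -/
class SkewBrace (B : Type*) [AddGroup B] [Group B] : Prop where
  compat : ∀ a b c : B, a * (b + c) = a * b + -a + a * c
  zero_eq_one : (0 : B) = 1

section Defs

variable {B : Type*} [AddGroup B] [Group B]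

/-- `λ_a(b) = -a + (a ∘ b)`. -/
def lambdaMap (a b : B) : B := -a + a * b

/-- `a * b := -a + (a ∘ b) - b` (the star product of a skew brace). -/
def starOp (a b : B) : B := -a + a * b + -b

/-- The additive commutator `[a,b]⁺ = a + b - a - b`. -/
def addComB (a b : B) : B := a + b + -a + -b

/-- The multiplicative commutator `[a,b]∘ = a ∘ b ∘ a⁻¹ ∘ b⁻¹`. -/
def mulComB (a b : B) : B := a * b * a⁻¹ * b⁻¹

/-- The brace centralizer `Cb_B(x) = {b | x*b = b*x = [x,b]⁺ = 1}`. -/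
def Cb (x : B) : Set B := {b | starOp x b = 0 ∧ starOp b x = 0 ∧ addComB x b = 0}

/-- The annihilator `Ann(B) = Ker λ ∩ Z(B,+) ∩ Z(B,∘)` as a set. -/
def AnnSet (B : Type*) [AddGroup B] [Group B] : Set B :=
  {a | (∀ b : B, a + b = a * b) ∧ (∀ b : B, a + b = b + a) ∧ (∀ b : B, a * b = b * a)}

/-- A sub-skew brace: a subset closed under both group operations and inverses. -/
def IsSubSkewBrace (H : Set B) : Prop :=
  (0 : B) ∈ H ∧ (∀ a ∈ H, ∀ b ∈ H, a + b ∈ H) ∧ (∀ a ∈ H, -a ∈ H) ∧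
    (∀ a ∈ H, ∀ b ∈ H, a * b ∈ H) ∧ (∀ a ∈ H, a⁻¹ ∈ H)

/-- The commuting probability of a (finite) skew brace. -/
noncomputable def Pb (B : Type*) [AddGroup B] [Group B] : ℚ :=
  (Nat.card {p : B × B //
      starOp p.1 p.2 = 0 ∧ starOp p.2 p.1 = 0 ∧ addComB p.1 p.2 = 0} : ℚ)
    / (Nat.card B : ℚ) ^ 2

/-- The commuting probability of a sub-skew brace `H` of `B`. -/
noncomputable def PbSub (H : Set B) : ℚ :=
  (Nat.card {p : B × B // p.1 ∈ H ∧ p.2 ∈ H ∧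
      starOp p.1 p.2 = 0 ∧ starOp p.2 p.1 = 0 ∧ addComB p.1 p.2 = 0} : ℚ)
    / (Nat.card H : ℚ) ^ 2

end Defs

/-- The lower central series of a skew brace: `GammaSB B 0 = Γ₁(B) = B` and
`GammaSB B n = Γ_{n+1}(B) = ⟨B*Γ_n, Γ_n*B, [B,Γ_n]⁺⟩⁺`. -/
def GammaSB (B : Type*) [AddGroup B] [Group B] : ℕ → AddSubgroup B
  | 0 => ⊤
  | n + 1 => AddSubgroup.closure
      {x : B | ∃ a u : B, u ∈ GammaSB B n ∧
        (x = starOp a u ∨ x = starOp u a ∨ x = addComB a u)}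

section Proof
variable {B : Type*} [AddGroup B] [Group B] [SkewBrace B]

lemma sb_zero_eq_one : (0 : B) = 1 := SkewBrace.zero_eq_one

lemma lam_add (a b c : B) : lambdaMap a (b + c) = lambdaMap a b + lambdaMap a c := by
  simp only [lambdaMap, SkewBrace.compat a b c, add_assoc]

lemma lam_zero (a : B) : lambdaMap a 0 = 0 := by
  rw [lambdaMap, sb_zero_eq_one, mul_one, neg_add_cancel, sb_zero_eq_one]

lemma lam_neg (a b : B) : lambdaMap a (-b) = - lambdaMap a b := by
  have := lam_add a (-b) b
  rw [neg_add_cancel, lam_zero] at this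
  exact eq_neg_of_add_eq_zero_left this.symm

lemma lam_comp (a b c : B) : lambdaMap a (lambdaMap b c) = lambdaMap (a * b) c := by
  have h2 : a * (-b + b) = a * (-b) + -a + a * b := SkewBrace.compat a (-b) b
  rw [neg_add_cancel, sb_zero_eq_one, mul_one] at h2
  have hneg : a * (-b) = a + -(a * b) + a := by
    have : a * (-b) + -a + a * b = a := h2.symm
    calc a * (-b) = a * (-b) + -a + a * b + -(a*b) + a := by
          simp [add_assoc]
      _ = a + -(a*b) + a := by rw [this]
  show -a + a * (-b + b * c) = -(a*b) + (a*b) * c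
  rw [SkewBrace.compat a (-b) (b*c), hneg, mul_assoc]
  simp [add_assoc]

lemma lam_inj {a b c : B} (h : lambdaMap a b = lambdaMap a c) : b = c := by
  simp only [lambdaMap] at h
  exact mul_left_cancel (add_left_cancel h)

lemma star_lam (a b : B) : starOp a b = lambdaMap a b + -b := rfl

lemma mul_lam (a b : B) : a * b = a + lambdaMap a b := by
  simp [lambdaMap, add_neg_cancel_left]

lemma lam_inv_self (a : B) : lambdaMap a a⁻¹ = -a := by
  rw [lambdaMap, mul_inv_cancel, ← sb_zero_eq_one, add_zero]

lemma lam_star (a p q : B) :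
    lambdaMap a (starOp p q) = starOp (a * p * a⁻¹) (lambdaMap a q) := by
  rw [star_lam p q, lam_add, lam_neg, lam_comp, star_lam, lam_comp, inv_mul_cancel_right]

lemma lam_addcom (a p q : B) :
    lambdaMap a (addComB p q) = addComB (lambdaMap a p) (lambdaMap a q) := by
  simp [addComB, lam_add, lam_neg]

lemma G1_eq : GammaSB B 1 = AddSubgroup.closure
    {x : B | ∃ a u : B, u ∈ (⊤ : AddSubgroup B) ∧
      (x = starOp a u ∨ x = starOp u a ∨ x = addComB a u)} := rfl

lemma star_mem_G1 (a b : B) : starOp a b ∈ GammaSB B 1 := by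
  rw [G1_eq]
  exact AddSubgroup.subset_closure ⟨a, b, AddSubgroup.mem_top b, Or.inl rfl⟩

lemma addcom_mem_G1 (a b : B) : addComB a b ∈ GammaSB B 1 := by
  rw [G1_eq]
  exact AddSubgroup.subset_closure ⟨a, b, AddSubgroup.mem_top b, Or.inr (Or.inr rfl)⟩

lemma lam_mem_G1 (a : B) {u : B} (hu : u ∈ GammaSB B 1) :
    lambdaMap a u ∈ GammaSB B 1 := by
  rw [G1_eq] at hu
  induction hu using AddSubgroup.closure_induction with
  | mem x hx =>
    obtain ⟨p, q, -, h | h | h⟩ := hx <;> subst h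
    · rw [lam_star]; exact star_mem_G1 _ _
    · rw [lam_star]; exact star_mem_G1 _ _
    · rw [lam_addcom]; exact addcom_mem_G1 _ _
  | zero => rw [lam_zero]; exact zero_mem _
  | add x y hx hy ihx ihy => rw [lam_add]; exact add_mem ihx ihy
  | neg x hx ihx => rw [lam_neg]; exact neg_mem ihx

lemma conj_mem_G1 (a : B) {u : B} (hu : u ∈ GammaSB B 1) :
    a + u + -a ∈ GammaSB B 1 := by
  have : a + u + -a = addComB a u + u := (neg_add_cancel_right _ u).symm
  rw [this]
  exact add_mem (addcom_mem_G1 a u) hu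

end Proof

/-- If `|Γ₂(B)| = 2` then `Γ₃(B) = 1`: `B` is nilpotent of class exactly 2. -/
theorem stmt16 {B : Type*} [AddGroup B] [Group B] [SkewBrace B]
    (h : Nat.card (GammaSB B 1) = 2) :
    GammaSB B 2 = ⊥ := by
  -- any two nonzero elements of Γ₂ are equal
  obtain ⟨t, ht, huniq⟩ := (Nat.card_eq_two_iff' (0 : GammaSB B 1)).mp h
  have two : ∀ u v : B, ∀ hu : u ∈ GammaSB B 1, ∀ hv : v ∈ GammaSB B 1,
      u ≠ 0 → v ≠ 0 → u = v := by
    intro u v hu hv hu0 hv0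
    have h1 : (⟨u, hu⟩ : GammaSB B 1) = t := huniq _ (fun e => hu0 (congrArg Subtype.val e))
    have h2 : (⟨v, hv⟩ : GammaSB B 1) = t := huniq _ (fun e => hv0 (congrArg Subtype.val e))
    exact congrArg Subtype.val (h1.trans h2.symm)
  -- λ fixes Γ₂ pointwise
  have lam_fix : ∀ a u : B, u ∈ GammaSB B 1 → lambdaMap a u = u := by
    intro a u hu
    by_cases h0 : u = 0
    · rw [h0, lam_zero]
    · exact two _ _ (lam_mem_G1 a hu) hu
        (fun e => h0 (lam_inj (e.trans (lam_zero a).symm))) h0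
  -- star with Γ₂ on the right vanishes
  have star_right : ∀ a u : B, u ∈ GammaSB B 1 → starOp a u = 0 := by
    intro a u hu
    rw [star_lam, lam_fix a u hu, add_neg_cancel]
  -- Γ₂ is additively central
  have add_central : ∀ a u : B, u ∈ GammaSB B 1 → a + u = u + a := by
    intro a u hu
    by_cases h0 : u = 0
    · rw [h0, add_zero, zero_add]
    · have hc : a + u + -a = u := by
        refine two _ _ (conj_mem_G1 a hu) hu ?_ h0
        intro e
        apply h0
        have huu : u = -a + (a + u + -a) + a := by
          simp [add_assoc]
        rw [huu, e, add_zero, neg_add_cancel]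
      calc a + u = a + u + -a + a := by rw [neg_add_cancel_right]
        _ = u + a := by rw [hc]
  have addcom_zero : ∀ a u : B, u ∈ GammaSB B 1 → addComB a u = 0 := by
    intro a u hu
    rw [addComB, add_central a u hu]
    simp [add_assoc]
  -- Γ₂ is multiplicatively central
  have mul_central : ∀ a u : B, u ∈ GammaSB B 1 → a * u = u * a := by
    intro a u hu
    by_cases h0 : u = 0
    · rw [h0, sb_zero_eq_one, mul_one, one_mul]
    · have key : a * u * a⁻¹ = a + (lambdaMap a u + lambdaMap a (starOp u a⁻¹)) + -a := by
        have h1 : u * a⁻¹ = u + (starOp u a⁻¹ + a⁻¹) := by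
          rw [star_lam, neg_add_cancel_right, mul_lam]
        rw [mul_assoc, h1, mul_lam a, lam_add, lam_add, lam_inv_self]
        simp [add_assoc]
      have hmem : a * u * a⁻¹ ∈ GammaSB B 1 := by
        rw [key]
        exact conj_mem_G1 a (add_mem (lam_mem_G1 a hu) (lam_mem_G1 a (star_mem_G1 u a⁻¹)))
      have hne : a * u * a⁻¹ ≠ 0 := by
        intro e
        apply h0
        have huu : u = a⁻¹ * (a * u * a⁻¹) * a := by group
        rw [huu, e, sb_zero_eq_one, mul_one, inv_mul_cancel, ← sb_zero_eq_one]
      have hcu : a * u * a⁻¹ = u := two _ _ hmem hu hne h0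
      calc a * u = a * u * a⁻¹ * a := by group
        _ = u * a := by rw [hcu]
  have star_left : ∀ a u : B, u ∈ GammaSB B 1 → starOp u a = 0 := by
    intro a u hu
    have hl : lambdaMap u a = a := by
      have h1 : u * a = a + u := by
        rw [← mul_central a u hu, mul_lam, lam_fix a u hu]
      have h2 : u * a = u + lambdaMap u a := mul_lam u a
      rw [h1, add_central a u hu] at h2
      exact (add_left_cancel h2).symm
    rw [star_lam, hl, add_neg_cancel]
  -- conclude
  have hrw : GammaSB B 2 = AddSubgroup.closure
      {x : B | ∃ a u : B, u ∈ GammaSB B 1 ∧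
        (x = starOp a u ∨ x = starOp u a ∨ x = addComB a u)} := rfl
  rw [hrw, eq_bot_iff, AddSubgroup.closure_le]
  rintro x ⟨a, u, hu, hx | hx | hx⟩ <;> subst hx <;>
    simp only [SetLike.mem_coe, AddSubgroup.mem_bot]
  · exact star_right a u hu
  · exact star_left a u hu
  · exact addcom_zero a u hu
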